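/- Let p, q be primes and let G = (C_p)^{d-1} ⋊ C_q where C_q acts on (C_p)^{d-1} by a nontrivial scalar (i.e., the generator of C_q acts as multiplication by a fixed element of order q in the multiplicative group of F_p). Then G is uniformly generated with d(G) = d. -/

import Mathlib

/-- A chain `⊥ = c 0 < c 1 < ⋯ < c n = ⊤` of subgroups is *unrefinable* if each
`c i` is maximal in `c (i+1)` (i.e. consecutive terms form a covering pair). -/
def IsUnrefinableChain {G : Type*} [Group G] {n : ℕ} (c : Fin (n + 1) → Subgroup G) : Prop :=
  c 0 = ⊥ ∧ c (Fin.last n) = ⊤ ∧ ∀ i : Fin n, c i.castSucc ⋖ c i.succ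

/-- The length `ℓ(G)`: the maximal length of an unrefinable chain of subgroups. -/
noncomputable def groupLength (G : Type*) [Group G] : ℕ :=
  sSup {n | ∃ c : Fin (n + 1) → Subgroup G, IsUnrefinableChain c}

/-- The depth `λ(G)`: the minimal length of an unrefinable chain of subgroups. -/
noncomputable def groupDepth (G : Type*) [Group G] : ℕ :=
  sInf {n | ∃ c : Fin (n + 1) → Subgroup G, IsUnrefinableChain c}

/-- `d(G)`: the minimal number of generators of `G`. -/
noncomputable def minGen (G : Type*) [Group G] : ℕ :=
  sInf {n | ∃ S : Finset G, S.card = n ∧ Subgroup.closure (S : Set G) = ⊤}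

/-- `m(G)`: the maximal size of an independent generating set of `G`. -/
noncomputable def maxIndep (G : Type*) [Group G] : ℕ :=
  sSup {n | ∃ S : Finset G, S.card = n ∧ Subgroup.closure (S : Set G) = ⊤ ∧
    ∀ a ∈ S, Subgroup.closure ((S : Set G) \ {a}) < ⊤}

/-- Given a tuple `x : Fin d → G`, the chain of subgroups
`⟨⟩ ≤ ⟨x 0⟩ ≤ ⟨x 0, x 1⟩ ≤ ⋯ ≤ ⟨x 0, …, x (d-1)⟩`. -/
def partialClosure {G : Type*} [Group G] {d : ℕ} (x : Fin d → G) (i : Fin (d + 1)) :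
    Subgroup G :=
  Subgroup.closure (x '' {j | (j : ℕ) < (i : ℕ)})

/-- `G` is *`d`-uniformly generated* if strictly ascending chains
`1 < ⟨x 1⟩ < ⋯ < ⟨x 1, …, x d⟩` exist, and every such chain ends at `G`. -/
def DUnifGen (G : Type*) [Group G] (d : ℕ) : Prop :=
  (∃ x : Fin d → G, StrictMono (partialClosure x)) ∧
  ∀ x : Fin d → G, StrictMono (partialClosure x) → Subgroup.closure (Set.range x) = ⊤

/-- `G` is *uniformly generated* if it is `d(G)`-uniformly generated. -/
def UniformlyGenerated (G : Type*) [Group G] : Prop :=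
  DUnifGen G (minGen G)

/-- `G` is elementary abelian: isomorphic to `(C_p)^k` for some prime `p`. -/
def IsElementaryAbelian (G : Type*) [Group G] : Prop :=
  ∃ (p k : ℕ), p.Prime ∧ Nonempty (G ≃* (Fin k → Multiplicative (ZMod p)))

/-- `G` is supersolvable: it has a normal series (all terms normal in `G`)
with cyclic factors (each step is obtained by adjoining a single element). -/
def IsSupersolvableGroup (G : Type*) [Group G] : Prop :=
  ∃ (n : ℕ) (c : Fin (n + 1) → Subgroup G),
    c 0 = ⊥ ∧ c (Fin.last n) = ⊤ ∧ Monotone c ∧ (∀ i, (c i).Normal) ∧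
    ∀ i : Fin n, ∃ g : G, c i.succ = c i.castSucc ⊔ Subgroup.zpowers g

/-- `G` is isomorphic to `(C_p)^{k} ⋊ C_q` where `C_q` acts by a nontrivial scalar:
expressed internally via a normal elementary abelian `p`-subgroup `N`, an element `g`
of order `q` complementing it, whose conjugation action raises every element of `N`
to a fixed power `c` which is a nontrivial scalar of multiplicative order `q` mod `p`. -/
def IsScalarExtension (G : Type*) [Group G] : Prop :=
  ∃ (p q : ℕ), p.Prime ∧ q.Prime ∧
    ∃ (N : Subgroup G) (g : G) (c : ℕ),
      N.Normal ∧ (∀ a ∈ N, ∀ b ∈ N, a * b = b * a) ∧ (∀ a ∈ N, a ^ p = 1) ∧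
      orderOf g = q ∧
      N ⊔ Subgroup.zpowers g = ⊤ ∧ N ⊓ Subgroup.zpowers g = ⊥ ∧
      (∀ n ∈ N, g * n * g⁻¹ = n ^ c) ∧
      c % p ≠ 1 % p ∧ c ^ q % p = 1 % p

/-!
Adjoining an element `x` to a subgroup `H` of `G = V ⋊ C_q` multiplies `|H|` by at most a
prime: if `x ∈ V` then `⟨x⟩` is normal (the action is scalar) of order `p`; if `H ≤ V` then `H`
is normal and `x` has order `q`; otherwise `H` maps onto `C_q`, so `x` may be replaced by an
element of `V` modulo `H`. Hence a generating set has at least `Ω(|G|) = d` elements, a strictly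
ascending chain has at most `Ω(|G|)` steps and reaches `G` once it has that many, and adjoining
elements greedily produces such a chain.
-/

open Subgroup ArithmeticFunction
open scoped ArithmeticFunction.Omega

theorem ArithmeticFunction.cardFactors_le_of_dvd {a b : ℕ} (h : a ∣ b) (hb : b ≠ 0) :
    Ω a ≤ Ω b := by
  simpa only [cardFactors_apply] using (Nat.primeFactorsList_sublist_of_dvd h hb).length_le

theorem ArithmeticFunction.cardFactors_lt_of_dvd_of_ne {a b : ℕ} (h : a ∣ b) (hb : b ≠ 0)
    (hab : a ≠ b) : Ω a < Ω b := by
  obtain ⟨k, rfl⟩ := h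
  have hk1 : 1 < k := by
    rcases k with _ | _ | k
    · simp at hb
    · simp at hab
    · omega
  rw [cardFactors_mul (left_ne_zero_of_mul hb) (by omega)]
  have := cardFactors_pos_iff_one_lt.mpr hk1
  omega

variable {G : Type*} [Group G]

theorem Subgroup.card_sup_dvd_card_mul_card_of_normal (H K : Subgroup G) [K.Normal] :
    Nat.card ↥(H ⊔ K) ∣ Nat.card K * Nat.card H := by
  have h := relIndex_mul_relIndex ⊥ K (H ⊔ K) bot_le le_sup_right
  rw [relIndex_bot_left, relIndex_bot_left, relIndex_sup_right] at h
  exact h ▸ mul_dvd_mul_left _ (relIndex_dvd_card _ _)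

theorem Subgroup.cardFactors_card_lt_of_lt [Finite G] {H K : Subgroup G} (h : H < K) :
    Ω (Nat.card H) < Ω (Nat.card K) :=
  cardFactors_lt_of_dvd_of_ne (card_dvd_of_le h.le) Nat.card_pos.ne'
    fun hc => h.ne (eq_of_le_of_card_ge h.le hc.ge)

theorem le_cardFactors_card_last_of_strictMono [Finite G] {n : ℕ}
    {c : Fin (n + 1) → Subgroup G} (hc : StrictMono c) : n ≤ Ω (Nat.card (c (Fin.last n))) := by
  suffices ∀ i : Fin (n + 1), (i : ℕ) ≤ Ω (Nat.card (c i)) from this (Fin.last n)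
  refine Fin.induction (Nat.zero_le _) fun i hi => ?_
  have := cardFactors_card_lt_of_lt (Fin.strictMono_iff_lt_succ.mp hc i)
  simp only [Fin.val_succ, Fin.val_castSucc] at hi ⊢
  omega

theorem partialClosure_last {n : ℕ} (x : Fin n → G) :
    partialClosure x (Fin.last n) = closure (Set.range x) := by
  simp [partialClosure, Fin.is_lt]

theorem closure_range_eq_top_of_strictMono_partialClosure [Finite G] {n : ℕ} {x : Fin n → G}
    (hx : StrictMono (partialClosure x)) (hn : Ω (Nat.card G) ≤ n) :
    closure (Set.range x) = ⊤ := by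
  have hle := le_cardFactors_card_last_of_strictMono hx
  rw [partialClosure_last] at hle
  by_contra hne
  have := cardFactors_card_lt_of_lt (lt_top_iff_ne_top.mpr hne)
  rw [card_top] at this
  omega

theorem minGen_le_of_closure_range_eq_top {n : ℕ} {x : Fin n → G}
    (hx : closure (Set.range x) = ⊤) : minGen G ≤ n := by
  classical
  have hgen : (Finset.univ.image x).card ∈
      {n | ∃ S : Finset G, S.card = n ∧ closure (S : Set G) = ⊤} :=
    ⟨_, rfl, by simpa using hx⟩
  calc minGen G ≤ (Finset.univ.image x).card := Nat.sInf_le hgen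
    _ ≤ n := Finset.card_image_le.trans (by simp)

theorem Subgroup.closure_insert_eq_sup_zpowers (s : Set G) (y : G) :
    closure (insert y s) = closure s ⊔ zpowers y := by
  rw [Set.insert_eq, closure_union, ← zpowers_eq_closure, sup_comm]

theorem partialClosure_snoc_castSucc {n : ℕ} (x : Fin n → G) (y : G) (i : Fin (n + 1)) :
    partialClosure (Fin.snoc x y : Fin (n + 1) → G) i.castSucc = partialClosure x i := by
  unfold partialClosure
  congr 1
  ext g
  simp only [Set.mem_image, Set.mem_ofPred_eq, Fin.exists_fin_succ', Fin.snoc_castSucc,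
    Fin.snoc_last, Fin.val_castSucc, Fin.val_last]
  exact or_iff_left fun h => i.is_le.not_gt h.1

theorem strictMono_partialClosure_snoc {n : ℕ} {x : Fin n → G} {y : G}
    (hx : StrictMono (partialClosure x)) (hy : y ∉ closure (Set.range x)) :
    StrictMono (partialClosure (Fin.snoc x y : Fin (n + 1) → G)) := by
  refine Fin.strictMono_iff_lt_succ.mpr fun i => ?_
  induction i using Fin.lastCases with
  | last =>
    rw [partialClosure_snoc_castSucc, Fin.succ_last, partialClosure_last, partialClosure_last,
      Fin.range_snoc]
    exact (Subgroup.closure_mono (Set.subset_insert _ _)).lt_of_not_ge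
      fun h => hy (h (subset_closure (Set.mem_insert _ _)))
  | cast j =>
    rw [partialClosure_snoc_castSucc, Fin.succ_castSucc, partialClosure_snoc_castSucc]
    exact hx Fin.castSucc_lt_succ

def HasPrimeIndexSteps (G : Type*) [Group G] : Prop :=
  ∀ (H : Subgroup G) (x : G), ∃ r : ℕ, r.Prime ∧ Nat.card ↥(H ⊔ zpowers x) ∣ r * Nat.card H

namespace HasPrimeIndexSteps

variable [Finite G] (hG : HasPrimeIndexSteps G)
include hG

theorem cardFactors_card_sup_zpowers_le (H : Subgroup G) (x : G) :
    Ω (Nat.card ↥(H ⊔ zpowers x)) ≤ Ω (Nat.card H) + 1 := by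
  obtain ⟨r, hr, hdvd⟩ := hG H x
  have := cardFactors_le_of_dvd hdvd (mul_ne_zero hr.ne_zero Nat.card_pos.ne')
  rwa [cardFactors_mul hr.ne_zero Nat.card_pos.ne', cardFactors_apply_prime hr, add_comm] at this

theorem cardFactors_card_closure_le (S : Finset G) :
    Ω (Nat.card (closure (S : Set G))) ≤ S.card := by
  classical
  induction S using Finset.induction_on with
  | empty => simp
  | insert a S ha ih =>
    rw [Finset.coe_insert, closure_insert_eq_sup_zpowers, Finset.card_insert_of_notMem ha]
    exact (hG.cardFactors_card_sup_zpowers_le _ a).trans (by omega)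

theorem exists_strictMono_partialClosure :
    ∃ x : Fin (Ω (Nat.card G)) → G, StrictMono (partialClosure x) := by
  suffices ∀ k ≤ Ω (Nat.card G), ∃ x : Fin k → G,
      StrictMono (partialClosure x) ∧ Ω (Nat.card (closure (Set.range x))) = k from
    (this _ le_rfl).imp fun _ => And.left
  intro k
  induction k with
  | zero => exact fun _ => ⟨Fin.elim0, Fin.strictMono_iff_lt_succ.mpr finZeroElim, by simp⟩
  | succ k ih =>
    intro hk
    obtain ⟨x, hx, hΩ⟩ := ih (by omega)
    obtain ⟨y, hy⟩ : ∃ y, y ∉ closure (Set.range x) := by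
      by_contra! h
      rw [(eq_top_iff' _).mpr h, card_top] at hΩ
      omega
    have hlt : closure (Set.range x) < closure (Set.range x) ⊔ zpowers y :=
      le_sup_left.lt_of_not_ge fun h => hy (h (mem_sup_right (mem_zpowers y)))
    refine ⟨Fin.snoc x y, strictMono_partialClosure_snoc hx hy, ?_⟩
    rw [Fin.range_snoc, closure_insert_eq_sup_zpowers]
    have := cardFactors_card_lt_of_lt hlt
    have := hG.cardFactors_card_sup_zpowers_le (closure (Set.range x)) y
    omega

theorem minGen_eq : minGen G = Ω (Nat.card G) := by
  obtain ⟨x, hx⟩ := hG.exists_strictMono_partialClosure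
  have hgen := closure_range_eq_top_of_strictMono_partialClosure hx le_rfl
  refine (minGen_le_of_closure_range_eq_top hgen).antisymm ?_
  have := Fintype.ofFinite G
  have hne : {n | ∃ S : Finset G, S.card = n ∧ closure (S : Set G) = ⊤}.Nonempty :=
    ⟨_, Finset.univ, rfl, by simp⟩
  obtain ⟨S, hS, hStop⟩ := Nat.sInf_mem hne
  have := hG.cardFactors_card_closure_le S
  rw [hStop, card_top, hS] at this
  exact this

theorem dUnifGen : DUnifGen G (Ω (Nat.card G)) :=
  ⟨hG.exists_strictMono_partialClosure,
    fun _ hx => closure_range_eq_top_of_strictMono_partialClosure hx le_rfl⟩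

end HasPrimeIndexSteps

theorem Subgroup.zpowers_normal_of_conj_mem {n : G} (hn : ∀ g : G, g * n * g⁻¹ ∈ zpowers n) :
    (zpowers n).Normal :=
  ⟨by rintro _ ⟨k, rfl⟩ g; simpa [conj_zpow] using zpow_mem (hn g) k⟩

theorem Subgroup.card_sup_zpowers_dvd_of_conj_mem (H : Subgroup G) {n : G}
    (hn : ∀ g : G, g * n * g⁻¹ ∈ zpowers n) :
    Nat.card ↥(H ⊔ zpowers n) ∣ orderOf n * Nat.card H := by
  have := zpowers_normal_of_conj_mem hn
  simpa [Nat.card_zpowers] using card_sup_dvd_card_mul_card_of_normal H (zpowers n)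

theorem Subgroup.sup_zpowers_mul_left_of_mem {H : Subgroup G} {h : G} (hh : h ∈ H) (y : G) :
    H ⊔ zpowers (h * y) = H ⊔ zpowers y := by
  refine le_antisymm (sup_le le_sup_left (zpowers_le.mpr ?_))
    (sup_le le_sup_left (zpowers_le.mpr ?_))
  · exact mul_mem (mem_sup_left hh) (mem_sup_right (mem_zpowers y))
  · simpa using mul_mem (mem_sup_left (inv_mem hh)) (mem_sup_right (mem_zpowers (h * y)))

theorem hasPrimeIndexSteps_of_ker [Finite G] {Q : Type*} [Group Q] (f : G →* Q) {p : ℕ}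
    (hp : p.Prime) (hQ : (Nat.card Q).Prime)
    (hconj : ∀ n ∈ f.ker, ∀ g : G, g * n * g⁻¹ ∈ zpowers n)
    (hexp : ∀ n ∈ f.ker, n ^ p = 1) (hord : ∀ x ∉ f.ker, x ^ Nat.card Q = 1) :
    HasPrimeIndexSteps G := by
  have step_ker : ∀ (H : Subgroup G), ∀ n ∈ f.ker,
      Nat.card ↥(H ⊔ zpowers n) ∣ p * Nat.card H := fun H n hn =>
    (H.card_sup_zpowers_dvd_of_conj_mem (hconj n hn)).trans
      (mul_dvd_mul_right (orderOf_dvd_of_pow_eq_one (hexp n hn)) _)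
  intro H x
  by_cases hx : x ∈ f.ker
  · exact ⟨p, hp, step_ker H x hx⟩
  by_cases hH : H ≤ f.ker
  · -- every subgroup of the kernel is normal
    have : H.Normal := ⟨fun h hh g => zpowers_le.mpr hh (hconj h (hH hh) g)⟩
    refine ⟨_, hQ, ?_⟩
    rw [sup_comm, mul_comm]
    exact (card_sup_dvd_card_mul_card_of_normal _ H).trans
      (mul_dvd_mul_left _ (Nat.card_zpowers x ▸ orderOf_dvd_of_pow_eq_one (hord x hx)))
  · -- `H` maps onto `Q`, so `x ∈ h * f.ker` for some `h ∈ H`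
    have : Fact (Nat.card Q).Prime := ⟨hQ⟩
    have hmap : H.map f = ⊤ := ((H.map f).eq_bot_or_eq_top_of_prime_card).resolve_left
      (mt (map_eq_bot_iff H).mp hH)
    obtain ⟨h, hh, hfh⟩ := mem_map.mp (hmap ▸ mem_top (f x))
    have hn : h⁻¹ * x ∈ f.ker := by simp [MonoidHom.mem_ker, hfh]
    refine ⟨p, hp, ?_⟩
    rw [← mul_inv_cancel_left h x, sup_zpowers_mul_left_of_mem hh]
    exact step_ker H _ hn

namespace SemidirectProduct

instance {N H : Type*} [Group N] [Group H] [Finite N] [Finite H] {φ : H →* MulAut N} :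
    Finite (N ⋊[φ] H) :=
  Finite.of_equiv _ equivProd.symm

theorem mul_inl_mul_inv {N H : Type*} [CommGroup N] [Group H] {φ : H →* MulAut N}
    (g : N ⋊[φ] H) (n : N) : g * inl n * g⁻¹ = inl (φ g.right n) := by
  ext <;> simp [mul_comm]

open Multiplicative

variable {p q : ℕ} [Fact p.Prime] {V : Type*} [AddCommGroup V] [Module (ZMod p) V]
  {c : ZMod p} {φ : Multiplicative (ZMod q) →* MulAut (Multiplicative V)}

theorem eq_inl_of_mem_ker_rightHom {x : Multiplicative V ⋊[φ] Multiplicative (ZMod q)}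
    (hx : x ∈ (rightHom : _ →* Multiplicative (ZMod q)).ker) : x = inl x.left := by
  ext
  · rfl
  · exact hx

theorem pow_prime_eq_one_of_mem_ker_rightHom {x : Multiplicative V ⋊[φ] Multiplicative (ZMod q)}
    (hx : x ∈ (rightHom : _ →* Multiplicative (ZMod q)).ker) : x ^ p = 1 := by
  rw [eq_inl_of_mem_ker_rightHom hx, ← map_pow, ← ofAdd_toAdd (x.left ^ p), toAdd_pow,
    ← Nat.cast_smul_eq_nsmul (ZMod p), ZMod.natCast_self, zero_smul, ofAdd_zero, map_one]

variable (hφ : ∀ (t : ZMod q) (v : V), φ (ofAdd t) (ofAdd v) = ofAdd (c ^ t.val • v))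
include hφ

theorem apply_eq_ofAdd_smul (t : Multiplicative (ZMod q)) (v : Multiplicative V) :
    φ t v = ofAdd (c ^ (toAdd t).val • toAdd v) := by
  simpa using hφ (toAdd t) (toAdd v)

theorem conj_mem_zpowers_of_mem_ker_rightHom
    {x : Multiplicative V ⋊[φ] Multiplicative (ZMod q)}
    (hx : x ∈ (rightHom : _ →* Multiplicative (ZMod q)).ker)
    (g : Multiplicative V ⋊[φ] Multiplicative (ZMod q)) :
    g * x * g⁻¹ ∈ zpowers x := by
  refine ⟨(c ^ (toAdd g.right).val).val, ?_⟩
  dsimp only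
  rw [eq_inl_of_mem_ker_rightHom hx, mul_inl_mul_inv, zpow_natCast, ← map_pow]
  congr 1
  rw [apply_eq_ofAdd_smul hφ, ← ofAdd_toAdd (x.left ^ _), toAdd_pow,
    ← Nat.cast_smul_eq_nsmul (ZMod p), ZMod.natCast_zmod_val]

theorem pow_eq_one_of_notMem_ker_rightHom [NeZero q] (hc : orderOf c = q)
    {x : Multiplicative V ⋊[φ] Multiplicative (ZMod q)}
    (hx : x ∉ (rightHom : _ →* Multiplicative (ZMod q)).ker) : x ^ q = 1 := by
  have hker : x ^ q ∈ (rightHom : _ →* Multiplicative (ZMod q)).ker := by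
    rw [MonoidHom.mem_ker, map_pow]
    simpa using pow_card_eq_one' (x := rightHom x)
  -- `x` commutes with `x ^ q = inl v`, so the scalar `c ^ k ≠ 1` by which `x` acts fixes `v`
  have hfix : φ x.right (x ^ q).left = (x ^ q).left := by
    have h := (Commute.self_pow x q).eq
    rw [← mul_inv_eq_iff_eq_mul, eq_inl_of_mem_ker_rightHom hker, mul_inl_mul_inv] at h
    exact inl_injective h
  set k := (toAdd x.right).val
  have hk : c ^ k ≠ 1 := by
    refine pow_ne_one_of_lt_orderOf ?_ (hc ▸ ZMod.val_lt _)
    rw [Ne, ZMod.val_eq_zero]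
    exact hx
  rw [apply_eq_ofAdd_smul hφ, ← ofAdd_toAdd (x ^ q).left, toAdd_ofAdd,
    ofAdd.apply_eq_iff_eq] at hfix
  have hzero : (c ^ k - 1) • toAdd (x ^ q).left = 0 := by rw [sub_smul, one_smul, hfix, sub_self]
  rw [eq_inl_of_mem_ker_rightHom hker, ← ofAdd_toAdd (x ^ q).left,
    (smul_eq_zero.mp hzero).resolve_left (sub_ne_zero.mpr hk), ofAdd_zero, map_one]

theorem hasPrimeIndexSteps [Finite V] [Fact q.Prime] (hc : orderOf c = q) :
    HasPrimeIndexSteps (Multiplicative V ⋊[φ] Multiplicative (ZMod q)) := by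
  refine hasPrimeIndexSteps_of_ker rightHom (Fact.out : p.Prime) (by simpa using Fact.out)
    (fun _ hn => conj_mem_zpowers_of_mem_ker_rightHom hφ hn)
    (fun _ hn => pow_prime_eq_one_of_mem_ker_rightHom hn) (fun _ hx => ?_)
  simpa using pow_eq_one_of_notMem_ker_rightHom hφ hc hx

end SemidirectProduct

/-- `G = (C_p)^{d-1} ⋊ C_q`, where the generator of `C_q` acts on
`(C_p)^{d-1}` as multiplication by a scalar `c` of multiplicative order `q` mod `p`,
is uniformly generated with `d(G) = d`. -/
theorem scalarSemidirect_uniformlyGenerated (p q d : ℕ) (hp : p.Prime) (hq : q.Prime)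
    (hd : 1 ≤ d) (c : ZMod p) (hc : orderOf c = q)
    (φ : Multiplicative (ZMod q) →* MulAut (Multiplicative (Fin (d - 1) → ZMod p)))
    (hφ : ∀ (x : ZMod q) (v : Fin (d - 1) → ZMod p),
      φ (Multiplicative.ofAdd x) (Multiplicative.ofAdd v)
        = Multiplicative.ofAdd (c ^ x.val • v)) :
    minGen (Multiplicative (Fin (d - 1) → ZMod p) ⋊[φ] Multiplicative (ZMod q)) = d ∧
    DUnifGen (Multiplicative (Fin (d - 1) → ZMod p) ⋊[φ] Multiplicative (ZMod q)) d := by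
  have : Fact p.Prime := ⟨hp⟩
  have : Fact q.Prime := ⟨hq⟩
  have hG := SemidirectProduct.hasPrimeIndexSteps hφ hc
  have hΩ : Ω (Nat.card (Multiplicative (Fin (d - 1) → ZMod p) ⋊[φ] Multiplicative (ZMod q)))
      = d := by
    simp only [SemidirectProduct.card, Nat.card_eq_fintype_card, Fintype.card_multiplicative,
      Fintype.card_pi, ZMod.card, Finset.prod_const, Finset.card_univ, Fintype.card_fin]
    rw [cardFactors_mul (pow_ne_zero _ hp.ne_zero) hq.ne_zero, cardFactors_apply_prime_pow hp,
      cardFactors_apply_prime hq]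
    omega
  have hU := hG.dUnifGen
  rw [hΩ] at hU
  exact ⟨hG.minGen_eq.trans hΩ, hU⟩
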